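/- arXiv:1205.4368 — 2 statements merged into one kernel-verified Lean document; each statement's English description precedes it below -/
import Mathlib

section
/- Let θ ∈ 𝕜. Then the following are equivalent: (i) there exists a feasible basis of V with respect to which the tridiagonal matrix representing A has constant row sum θ (each row of the matrix sums to θ); (ii) θ is an eigenvalue of A and u_i(θ) ≠ 0 for 0 ≤ i ≤ d, where the polynomials u_i are defined from the fixed feasible basis. -/
/-!
Since each `E*ᵢV` is a line, the feasible bases are exactly the rescalings `wᵢ = sᵢ • vᵢ` with
all `sᵢ ≠ 0`, and in such a basis the `i`-th row sum of the matrix of `A` is `(M s)ᵢ / sᵢ`, where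
`M` is the tridiagonal matrix of `A` in the basis `v`. So (i) says that `M` has a `θ`-eigenvector
without zero entries. As all `bᵢ ≠ 0`, rows `0, …, d - 1` of `M x = θ x` determine `x` from `x₀`,
namely `xᵢ = x₀ uᵢ(θ)`; so every eigenvector has `x₀ ≠ 0`, and it has no zero entry iff no `uᵢ(θ)`
vanishes.
-/

open Module Matrix Function

section Rescaling

variable {𝕜 V ι : Type*} [Field 𝕜] [AddCommGroup V] [Module 𝕜 V]

theorem exists_unit_smul_eq_of_finrank_eq_one {P : Submodule 𝕜 V} (hP : finrank 𝕜 P = 1)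
    {x y : V} (hx : x ∈ P) (hx0 : x ≠ 0) (hy : y ∈ P) (hy0 : y ≠ 0) :
    ∃ s : 𝕜ˣ, s • x = y := by
  obtain ⟨s, hs⟩ := (finrank_eq_one_iff_of_nonzero' (⟨x, hx⟩ : P) (by simpa)).mp hP ⟨y, hy⟩
  have hs' : s • x = y := congrArg Subtype.val hs
  refine ⟨Units.mk0 s ?_, hs'⟩
  rintro rfl
  exact hy0 (by rw [← hs', zero_smul])

theorem Module.Basis.exists_eq_unitsSMul_of_finrank_eq_one {P : ι → Submodule 𝕜 V}
    (hP : ∀ i, finrank 𝕜 (P i) = 1) {v w : Basis ι 𝕜 V} (hv : ∀ i, v i ∈ P i)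
    (hw : ∀ i, w i ∈ P i) : ∃ s : ι → 𝕜ˣ, w = v.unitsSMul s := by
  choose s hs using fun i ↦
    exists_unit_smul_eq_of_finrank_eq_one (hP i) (hv i) (v.ne_zero i) (hw i) (w.ne_zero i)
  exact ⟨s, Basis.eq_of_apply_eq fun i ↦ by rw [Basis.unitsSMul_apply, hs]⟩

variable [Fintype ι] [DecidableEq ι]

theorem LinearMap.sum_toMatrix_unitsSMul_row (A : End 𝕜 V) (v : Basis ι 𝕜 V) (s : ι → 𝕜ˣ)
    (i : ι) :
    ∑ j, toMatrix (v.unitsSMul s) (v.unitsSMul s) A i j =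
      (s i)⁻¹ * (toMatrix v v A *ᵥ fun j ↦ (s j : 𝕜)) i := by
  simp only [LinearMap.toMatrix_apply, Basis.unitsSMul_apply, Basis.repr_unitsSMul, map_smul,
    mulVec, dotProduct, Finset.mul_sum, Units.smul_def, Finsupp.smul_apply, smul_eq_mul]
  exact Finset.sum_congr rfl fun j _ ↦ by ring

theorem exists_basis_mem_sum_toMatrix_row_eq_iff {P : ι → Submodule 𝕜 V}
    (hP : ∀ i, finrank 𝕜 (P i) = 1) {v : Basis ι 𝕜 V} (hv : ∀ i, v i ∈ P i) (A : End 𝕜 V)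
    (θ : 𝕜) :
    (∃ w : Basis ι 𝕜 V, (∀ i, w i ∈ P i) ∧ ∀ i, ∑ j, LinearMap.toMatrix w w A i j = θ) ↔
      ∃ x : ι → 𝕜, (∀ i, x i ≠ 0) ∧ LinearMap.toMatrix v v A *ᵥ x = θ • x := by
  constructor
  · rintro ⟨w, hw, hrow⟩
    obtain ⟨s, rfl⟩ := Basis.exists_eq_unitsSMul_of_finrank_eq_one hP hv hw
    refine ⟨fun j ↦ s j, fun i ↦ (s i).ne_zero, funext fun i ↦ ?_⟩
    have hrowi := hrow i
    rw [LinearMap.sum_toMatrix_unitsSMul_row, Units.inv_mul_eq_iff_eq_mul] at hrowi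
    simp [hrowi, mul_comm]
  · rintro ⟨x, hx0, hx⟩
    refine ⟨v.unitsSMul fun i ↦ Units.mk0 (x i) (hx0 i), fun i ↦ ?_, fun i ↦ ?_⟩
    · rw [Basis.unitsSMul_apply]
      exact Submodule.smul_of_tower_mem _ _ (hv i)
    · rw [LinearMap.sum_toMatrix_unitsSMul_row]
      simp only [hx, Units.val_inv_eq_inv_val, Units.val_mk0, Pi.smul_apply, smul_eq_mul]
      rw [mul_comm θ, inv_mul_cancel_left₀ (hx0 i)]

theorem Module.End.hasEigenvalue_iff_exists_toMatrix_mulVec_eq_smul (A : End 𝕜 V)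
    (v : Basis ι 𝕜 V) (θ : 𝕜) :
    A.HasEigenvalue θ ↔ ∃ x ≠ 0, LinearMap.toMatrix v v A *ᵥ x = θ • x := by
  rw [hasEigenvalue_iff, Submodule.ne_bot_iff]
  constructor
  · rintro ⟨y, hy, hy0⟩
    refine ⟨v.repr y, by simpa using hy0, ?_⟩
    rw [LinearMap.toMatrix_mulVec_repr, mem_eigenspace_iff.mp hy]
    ext i
    simp
  · rintro ⟨x, hx0, hx⟩
    refine ⟨v.equivFun.symm x, mem_eigenspace_iff.mpr (v.equivFun.injective ?_),
      (LinearEquiv.map_ne_zero_iff _).mpr hx0⟩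
    have hrepr := LinearMap.toMatrix_mulVec_repr v v A (v.equivFun.symm x)
    rw [← Basis.equivFun_apply, ← Basis.equivFun_apply, LinearEquiv.apply_symm_apply] at hrepr
    rw [map_smul, LinearEquiv.apply_symm_apply, ← hx, hrepr]

end Rescaling

section Tridiagonal

variable {R : Type*} [CommRing R]

def tridiagonal (a b c : ℕ → R) (n : ℕ) : Matrix (Fin n) (Fin n) R :=
  of fun i j ↦
    if (i : ℕ) = j then a i
    else if (i : ℕ) + 1 = j then b i
    else if (j : ℕ) + 1 = i then c i else 0

theorem Fin.sum_ite_val_eq_mul_extend {n : ℕ} (x : Fin n → R) (k : ℕ) (r : R) :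
    ∑ j : Fin n, (if (j : ℕ) = k then r * x j else 0) = r * extend Fin.val x 0 k := by
  set X := extend Fin.val x 0
  have hX : ∀ j : Fin n, X j = x j := Fin.val_injective.extend_apply x 0
  calc _ = ∑ j : Fin n, if (j : ℕ) = k then r * X j else 0 := by simp only [hX]
    _ = ∑ j ∈ Finset.range n, if j = k then r * X j else 0 :=
      Fin.sum_univ_eq_sum_range (fun j ↦ if j = k then r * X j else 0) n
    _ = r * X k := by
      rw [Finset.sum_ite_eq']
      split_ifs with hk
      · rfl
      · have hXk : X k = 0 := extend_apply' (f := Fin.val) x 0 k <| by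
          rintro ⟨j, rfl⟩
          exact hk (Finset.mem_range.mpr j.isLt)
        rw [hXk, mul_zero]

-- `x` is extended by zero to `ℕ`; in row `0` the truncated `0 - 1 = 0` is harmless as `c 0 = 0`.
theorem tridiagonal_mulVec_apply {a b c : ℕ → R} (hc0 : c 0 = 0) {n : ℕ} (x : Fin n → R)
    (i : Fin n) :
    (tridiagonal a b c n *ᵥ x) i =
      c i * extend Fin.val x 0 (i - 1) + a i * extend Fin.val x 0 i +
        b i * extend Fin.val x 0 (i + 1) := by
  have hsplit : ∀ j : Fin n, tridiagonal a b c n i j * x j =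
      (if (j : ℕ) = i - 1 then c i * x j else 0) + (if (j : ℕ) = i then a i * x j else 0) +
        (if (j : ℕ) = i + 1 then b i * x j else 0) := by
    intro j
    simp only [tridiagonal, of_apply]
    split_ifs <;> first | omega | ring1 | simp [show (i : ℕ) = 0 by omega, hc0]
  simp only [mulVec, dotProduct, hsplit, Finset.sum_add_distrib, Fin.sum_ite_val_eq_mul_extend]

def ThreeTermRecurrence (a b c : ℕ → R) (θ : R) (d : ℕ) (f : ℕ → R) : Prop :=
  ∀ n < d, θ * f n = c n * f (n - 1) + a n * f n + b n * f (n + 1)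

namespace ThreeTermRecurrence

variable {a b c : ℕ → R} {θ : R} {d : ℕ} {f g : ℕ → R}

theorem eq_zero [NoZeroDivisors R] (hb : ∀ n < d, b n ≠ 0) (hf : ThreeTermRecurrence a b c θ d f)
    (h0 : f 0 = 0) : ∀ n ≤ d, f n = 0 := by
  intro n
  induction n using Nat.strong_induction_on with
  | _ n ih =>
    rcases n with _ | m
    · exact fun _ ↦ h0
    intro hm
    have hrec := hf m (by omega)
    rw [ih m (by omega) (by omega), ih (m - 1) (by omega) (by omega)] at hrec
    simpa [hb m (by omega)] using hrec.symm

theorem eq_mul [NoZeroDivisors R] (hb : ∀ n < d, b n ≠ 0) (hf : ThreeTermRecurrence a b c θ d f)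
    (hg : ThreeTermRecurrence a b c θ d g) (hg0 : g 0 = 1) : ∀ n ≤ d, f n = f 0 * g n := by
  have hfg : ThreeTermRecurrence a b c θ d fun n ↦ f n - f 0 * g n := fun n hn ↦ by
    linear_combination hf n hn - f 0 * hg n hn
  intro n hn
  exact sub_eq_zero.mp (hfg.eq_zero hb (by simp [hg0]) n hn)

end ThreeTermRecurrence

theorem threeTermRecurrence_of_tridiagonal_mulVec_eq_smul {a b c : ℕ → R} (hc0 : c 0 = 0)
    {θ : R} {d : ℕ} {x : Fin (d + 1) → R} (hx : tridiagonal a b c (d + 1) *ᵥ x = θ • x) :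
    ThreeTermRecurrence a b c θ d (extend Fin.val x 0) := by
  intro n hn
  have hrow := congrFun hx ⟨n, by omega⟩
  rw [tridiagonal_mulVec_apply hc0] at hrow
  rw [Fin.val_injective.extend_apply x 0 ⟨n, by omega⟩] at hrow ⊢
  exact hrow.symm

theorem tridiagonal_eigenvector_eq_mul [NoZeroDivisors R] {a b c : ℕ → R} (hc0 : c 0 = 0) {d : ℕ}
    (hb : ∀ n < d, b n ≠ 0) {θ : R} {g : ℕ → R} (hg : ThreeTermRecurrence a b c θ d g)
    (hg0 : g 0 = 1) {x : Fin (d + 1) → R} (hx : tridiagonal a b c (d + 1) *ᵥ x = θ • x)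
    (i : Fin (d + 1)) : x i = x 0 * g i := by
  have h := (threeTermRecurrence_of_tridiagonal_mulVec_eq_smul hc0 hx).eq_mul hb hg hg0 i
    (by omega)
  rwa [Fin.val_injective.extend_apply, ← Fin.val_zero (d + 1),
    Fin.val_injective.extend_apply] at h

end Tridiagonal

theorem stmt_18_general {𝕜 : Type*} [Field 𝕜] {V : Type*} [AddCommGroup V] [Module 𝕜 V]
    {d : ℕ}
    (A : Module.End 𝕜 V)
    (Estar : Fin (d + 1) → Module.End 𝕜 V)
    (hrank : ∀ i, Module.finrank 𝕜 (LinearMap.range (Estar i)) = 1)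
    (v : Module.Basis (Fin (d + 1)) 𝕜 V) (hfeas : ∀ i, v i ∈ LinearMap.range (Estar i))
    (a b c : ℕ → 𝕜)
    (hM : ∀ i j : Fin (d + 1), LinearMap.toMatrix v v A i j =
      if (i : ℕ) = (j : ℕ) then a i
      else if (i : ℕ) + 1 = (j : ℕ) then b i
      else if (j : ℕ) + 1 = (i : ℕ) then c i else 0)
    (hb : ∀ i, i < d → b i ≠ 0) (hc0 : c 0 = 0)
    (u : ℕ → Polynomial 𝕜) (hu0 : u 0 = 1)
    (hu : ∀ i, i < d → Polynomial.X * u i =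
      Polynomial.C (c i) * u (i - 1) + Polynomial.C (a i) * u i + Polynomial.C (b i) * u (i + 1))
    (θv : 𝕜) :
    (∃ w : Module.Basis (Fin (d + 1)) 𝕜 V,
        (∀ i, w i ∈ LinearMap.range (Estar i)) ∧
        ∀ i : Fin (d + 1), (∑ j : Fin (d + 1), LinearMap.toMatrix w w A i j) = θv)
      ↔ (Module.End.HasEigenvalue A θv ∧ ∀ i ≤ d, (u i).eval θv ≠ 0) := by
  have hMt : LinearMap.toMatrix v v A = tridiagonal a b c (d + 1) := Matrix.ext hM
  have hu_rec : ThreeTermRecurrence a b c θv d fun n ↦ (u n).eval θv := fun n hn ↦ by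
    simpa using congrArg (Polynomial.eval θv) (hu n hn)
  have heig (x : Fin (d + 1) → 𝕜) (hx : tridiagonal a b c (d + 1) *ᵥ x = θv • x) (i) :
      x i = x 0 * (u i).eval θv :=
    tridiagonal_eigenvector_eq_mul hc0 hb hu_rec (by simp [hu0]) hx i
  rw [exists_basis_mem_sum_toMatrix_row_eq_iff hrank hfeas,
    Module.End.hasEigenvalue_iff_exists_toMatrix_mulVec_eq_smul A v, hMt]
  constructor
  · rintro ⟨x, hx0, hx⟩
    refine ⟨⟨x, fun h ↦ hx0 0 (congrFun h 0), hx⟩, fun i hi ↦ ?_⟩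
    have hxi := hx0 ⟨i, by omega⟩
    rw [heig x hx] at hxi
    exact right_ne_zero_of_mul hxi
  · rintro ⟨⟨x, hx0, hx⟩, hu_ne⟩
    have hx00 : x 0 ≠ 0 := fun h ↦ hx0 (funext fun i ↦ by rw [heig x hx i, h, zero_mul]; rfl)
    exact ⟨x, fun i ↦ by rw [heig x hx i]; exact mul_ne_zero hx00 (hu_ne i (by omega)), hx⟩

/-- There is a feasible basis for which the matrix representing A has constant row sum θ
iff θ is an eigenvalue of A and uᵢ(θ) ≠ 0 for 0 ≤ i ≤ d. -/
theorem stmt_18 {𝕜 : Type*} [Field 𝕜] {V : Type*} [AddCommGroup V] [Module 𝕜 V]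
    [FiniteDimensional 𝕜 V] {d : ℕ} (hdim : Module.finrank 𝕜 V = d + 1)
    (A : Module.End 𝕜 V)
    (Estar : Fin (d + 1) → Module.End 𝕜 V)
    (hidem : ∀ i j, Estar i * Estar j = if i = j then Estar i else 0)
    (hrank : ∀ i, Module.finrank 𝕜 (LinearMap.range (Estar i)) = 1)
    (htri : ∀ i j : Fin (d + 1), 1 < |((i : ℕ) : ℤ) - ((j : ℕ) : ℤ)| → Estar i * A * Estar j = 0)
    (hirr : ∀ i j : Fin (d + 1), |((i : ℕ) : ℤ) - ((j : ℕ) : ℤ)| = 1 → Estar i * A * Estar j ≠ 0)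
    (hd : 1 ≤ d)
    (θ : Fin (d + 1) → 𝕜) (hθ : Function.Injective θ)
    (E : Fin (d + 1) → Module.End 𝕜 V)
    (hEidem : ∀ i j, E i * E j = if i = j then E i else 0)
    (hErank : ∀ i, Module.finrank 𝕜 (LinearMap.range (E i)) = 1)
    (hA : A = ∑ i, θ i • E i)
    (v : Module.Basis (Fin (d + 1)) 𝕜 V) (hfeas : ∀ i, v i ∈ LinearMap.range (Estar i))
    (a b c : ℕ → 𝕜)
    (hM : ∀ i j : Fin (d + 1), LinearMap.toMatrix v v A i j =
      if (i : ℕ) = (j : ℕ) then a i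
      else if (i : ℕ) + 1 = (j : ℕ) then b i
      else if (j : ℕ) + 1 = (i : ℕ) then c i else 0)
    (ha : ∀ i : Fin (d + 1), a i = LinearMap.trace 𝕜 V (Estar i * A))
    (hb : ∀ i, i < d → b i ≠ 0) (hbd : b d = 0)
    (hc : ∀ i, 0 < i → i ≤ d → c i ≠ 0) (hc0 : c 0 = 0)
    (u : ℕ → Polynomial 𝕜) (hu0 : u 0 = 1)
    (hu : ∀ i, i < d → Polynomial.X * u i =
      Polynomial.C (c i) * u (i - 1) + Polynomial.C (a i) * u i + Polynomial.C (b i) * u (i + 1))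
    (hud : Polynomial.X * u d =
      Polynomial.C (c d) * u (d - 1) + Polynomial.C (a d) * u d +
        Polynomial.C (∏ h ∈ Finset.range d, b h)⁻¹ * u (d + 1))
    (θv : 𝕜) :
    (∃ w : Module.Basis (Fin (d + 1)) 𝕜 V,
        (∀ i, w i ∈ LinearMap.range (Estar i)) ∧
        ∀ i : Fin (d + 1), (∑ j : Fin (d + 1), LinearMap.toMatrix w w A i j) = θv)
      ↔ (Module.End.HasEigenvalue A θv ∧ ∀ i ≤ d, (u i).eval θv ≠ 0) :=
  stmt_18_general A Estar hrank v hfeas a b c hM hb hc0 u hu0 hu θv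
end

section
/- Assume in addition that the tridiagonal matrix representing A with respect to the fixed feasible basis has constant row sum θ_r for some eigenvalue θ_r of A (i.e., c_i + a_i + b_i = θ_r for 0 ≤ i ≤ d, with conventions c_0 = 0 and b_d = 0). Fix an integer s with 0 ≤ s ≤ d and s ≠ r. Then the following are equivalent: (i) in the graph Δ, vertex r is adjacent to vertex s and to no other vertices; (ii) c_iθ*_{i−1} + a_iθ*_i + b_iθ*_{i+1} − θ_rθ*_i = (θ_s − θ_r)(θ*_i − a*_r) for 0 ≤ i ≤ d (using the conventions c_0 = 0 and b_d = 0, so the terms with indices −1 and d+1 vanish), and A* is not a scalar multiple of the identity I. -/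
/-!
The rows of the tridiagonal matrix of `A` sum to `θ r`, so `u = ∑ vᵢ` spans the `θ r`-eigenspace
and `E r = u ⊗ f` for a linear form `f` with `f u = 1` and `f ∘ A = θ r • f`. The form
`g = f ∘ A* - a*_r • f` (note `a*_r = f (A* u)`) satisfies `g ∘ E r = 0`, and `E r A* E t` vanishes
exactly when `g ∘ E t` does; hence (i) says that `g` is a nonzero left `θ s`-eigenvector of `A`.

A left `θ r`-eigenvector of an irreducible tridiagonal matrix is proportional to
`kᵢ = b₀⋯bᵢ₋₁ / (c₁⋯cᵢ)`, and `diag k` symmetrizes the matrix. So `f (vᵢ)` symmetrizes it too,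
and `g (vᵢ) = f (vᵢ) (θ*ᵢ - a*_r)` is a left `θ s`-eigenvector iff `(θ*ᵢ - a*_r)ᵢ` is a right one,
which is the recurrence of (ii); finally `g ≠ 0` iff some `θ*ᵢ ≠ a*_r` iff `A*` is not scalar.
-/

open Finset Matrix

section Idempotents

variable {𝕜 V ι : Type*} [Field 𝕜] [AddCommGroup V] [Module 𝕜 V] {E : ι → Module.End 𝕜 V}

lemma OrthogonalIdempotents.apply_of_mem_range [DecidableEq ι] (hE : OrthogonalIdempotents E)
    (i : ι) {j : ι} {x : V} (hx : x ∈ LinearMap.range (E j)) :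
    E i x = if i = j then x else 0 := by
  obtain ⟨y, rfl⟩ := hx
  rw [← Module.End.mul_apply, hE.mul_eq]
  split_ifs with h <;> simp [h]

variable [Fintype ι]

lemma OrthogonalIdempotents.completeOrthogonalIdempotents_of_card_eq_finrank
    [FiniteDimensional 𝕜 V] (hE : OrthogonalIdempotents E) (hne : ∀ i, E i ≠ 0)
    (hcard : Fintype.card ι = Module.finrank 𝕜 V) : CompleteOrthogonalIdempotents E := by
  classical
  refine ⟨hE, ?_⟩
  have hw : ∀ i, ∃ w ∈ LinearMap.range (E i), w ≠ 0 := fun i => by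
    obtain ⟨x, hx⟩ := not_forall.1 fun h => hne i (LinearMap.ext h)
    exact ⟨E i x, LinearMap.mem_range_self _ x, hx⟩
  choose w hw_mem hw_ne using hw
  have hEw : ∀ i j, E i (w j) = if i = j then w j else 0 := fun i j =>
    hE.apply_of_mem_range i (hw_mem j)
  have hli : LinearIndependent 𝕜 w := by
    refine Fintype.linearIndependent_iff.2 fun g hg i => ?_
    have := congrArg (E i) hg
    simp only [map_sum, map_smul, hEw, smul_ite, smul_zero, sum_ite_eq, mem_univ, if_true,
      map_zero] at this
    exact (smul_eq_zero.1 this).resolve_right (hw_ne i)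
  refine LinearMap.ext_on_range (hli.span_eq_top_of_card_eq_finrank' hcard) fun j => ?_
  simp [LinearMap.sum_apply, hEw]

lemma CompleteOrthogonalIdempotents.sum_apply_eq (hE : CompleteOrthogonalIdempotents E) (x : V) :
    ∑ i, E i x = x := by
  rw [← LinearMap.sum_apply, hE.complete, Module.End.one_apply]

lemma CompleteOrthogonalIdempotents.apply_eq_of_forall_ne (hE : CompleteOrthogonalIdempotents E)
    {s : ι} {x : V} (hx : ∀ t ≠ s, E t x = 0) : E s x = x := by
  conv_rhs => rw [← hE.sum_apply_eq x]
  rw [sum_eq_single s (fun t _ ht => hx t ht) (by simp)]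

lemma CompleteOrthogonalIdempotents.comp_eq_self_of_forall_ne {W : Type*} [AddCommGroup W]
    [Module 𝕜 W] (hE : CompleteOrthogonalIdempotents E) {g : V →ₗ[𝕜] W} {s : ι}
    (hg : ∀ t ≠ s, g ∘ₗ E t = 0) : g ∘ₗ E s = g := LinearMap.ext fun x => by
  conv_rhs => rw [← hE.sum_apply_eq x]
  rw [map_sum, sum_eq_single s (fun t _ ht => by simpa using LinearMap.congr_fun (hg t ht) x)
    (by simp)]
  rfl

variable [DecidableEq ι]

lemma OrthogonalIdempotents.mul_sum_smul {R : Type*} [Ring R] [Algebra 𝕜 R] {e : ι → R}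
    (he : OrthogonalIdempotents e) (θ : ι → 𝕜) (t : ι) : e t * ∑ i, θ i • e i = θ t • e t := by
  simp [mul_sum, he.mul_eq]

lemma OrthogonalIdempotents.sum_smul_mul {R : Type*} [Ring R] [Algebra 𝕜 R] {e : ι → R}
    (he : OrthogonalIdempotents e) (θ : ι → 𝕜) (t : ι) : (∑ i, θ i • e i) * e t = θ t • e t := by
  simp [sum_mul, he.mul_eq]

variable {θ : ι → 𝕜}

lemma CompleteOrthogonalIdempotents.mem_range_of_apply_eq_smul
    (hE : CompleteOrthogonalIdempotents E) (hθ : Function.Injective θ) {r : ι} {z : V}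
    (hz : (∑ i, θ i • E i) z = θ r • z) : z ∈ LinearMap.range (E r) := by
  refine ⟨z, hE.apply_eq_of_forall_ne fun t ht => ?_⟩
  have h := congrArg (E t) hz
  rw [← Module.End.mul_apply, hE.mul_sum_smul, map_smul, LinearMap.smul_apply] at h
  have h' : (θ t - θ r) • E t z = 0 := by rw [sub_smul, h, sub_self]
  exact (smul_eq_zero.1 h').resolve_left (sub_ne_zero.2 (hθ.ne ht))

lemma CompleteOrthogonalIdempotents.range_eq_span_of_apply_eq_smul [FiniteDimensional 𝕜 V]
    (hE : CompleteOrthogonalIdempotents E) (hθ : Function.Injective θ) {r : ι}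
    (hr : Module.finrank 𝕜 (LinearMap.range (E r)) = 1) {u : V} (hu : u ≠ 0)
    (hAu : (∑ i, θ i • E i) u = θ r • u) : LinearMap.range (E r) = Submodule.span 𝕜 {u} :=
  (Submodule.eq_of_le_of_finrank_eq
    ((Submodule.span_singleton_le_iff_mem _ _).2 (hE.mem_range_of_apply_eq_smul hθ hAu))
    (by rw [finrank_span_singleton hu, hr])).symm

lemma CompleteOrthogonalIdempotents.comp_eq_smul_iff {W : Type*} [AddCommGroup W] [Module 𝕜 W]
    (hE : CompleteOrthogonalIdempotents E) (hθ : Function.Injective θ) (g : V →ₗ[𝕜] W) (s : ι) :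
    g ∘ₗ (∑ i, θ i • E i) = θ s • g ↔ ∀ t ≠ s, g ∘ₗ E t = 0 := by
  refine ⟨fun h t ht => ?_, fun h => ?_⟩
  · have h' : (θ t - θ s) • (g ∘ₗ E t) = 0 := by
      rw [sub_smul, ← LinearMap.comp_smul, ← hE.sum_smul_mul, Module.End.mul_eq_comp,
        ← LinearMap.comp_assoc, h, LinearMap.smul_comp, sub_self]
    exact (smul_eq_zero.1 h').resolve_left (sub_ne_zero.2 (hθ.ne ht))
  · conv_lhs => rw [← hE.comp_eq_self_of_forall_ne h]
    rw [LinearMap.comp_assoc, ← Module.End.mul_eq_comp, hE.mul_sum_smul, LinearMap.comp_smul,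
      hE.comp_eq_self_of_forall_ne h]

end Idempotents

section RankOne

variable {𝕜 V : Type*} [Field 𝕜] [AddCommGroup V] [Module 𝕜 V]

lemma LinearMap.eq_smulRight_of_range_le_span {T : Module.End 𝕜 V} {u : V}
    (hT : LinearMap.range T ≤ Submodule.span 𝕜 {u}) {φ : V →ₗ[𝕜] 𝕜} (hφ : φ u = 1) :
    T = (φ ∘ₗ T).smulRight u := by
  ext x
  obtain ⟨c, hc⟩ := Submodule.mem_span_singleton.1 (hT (LinearMap.mem_range_self T x))
  simp [← hc, hφ]

lemma LinearMap.smulRight_mul (f : V →ₗ[𝕜] 𝕜) (u : V) (T : Module.End 𝕜 V) :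
    f.smulRight u * T = (f ∘ₗ T).smulRight u := rfl

lemma LinearMap.smulRight_eq_zero_iff {f : V →ₗ[𝕜] 𝕜} {u : V} (hu : u ≠ 0) :
    f.smulRight u = 0 ↔ f = 0 := by
  refine ⟨fun h => LinearMap.ext fun x => ?_, fun h => by rw [h, LinearMap.zero_smulRight]⟩
  simpa [hu] using LinearMap.congr_fun h x

lemma OrthogonalIdempotents.eq_smulRight_comp_of_range_eq_span {ι : Type*} [Fintype ι]
    [DecidableEq ι] {E : ι → Module.End 𝕜 V} (hE : OrthogonalIdempotents E) (θ : ι → 𝕜) {r : ι}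
    {u : V} (hr : LinearMap.range (E r) = Submodule.span 𝕜 {u}) {φ : V →ₗ[𝕜] 𝕜} (hφ : φ u = 1) :
    E r = (φ ∘ₗ E r).smulRight u ∧ (φ ∘ₗ E r) u = 1 ∧
      (φ ∘ₗ E r) ∘ₗ (∑ i, θ i • E i) = θ r • (φ ∘ₗ E r) := by
  refine ⟨LinearMap.eq_smulRight_of_range_le_span hr.le hφ, ?_, ?_⟩
  · simp [hE.apply_of_mem_range r (hr ▸ Submodule.mem_span_singleton_self u), hφ]
  · rw [LinearMap.comp_assoc, ← Module.End.mul_eq_comp, hE.mul_sum_smul, LinearMap.comp_smul]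

/-- For `t ≠ r` we have `E r * T * E t = u ⊗ (g ∘ E t)` with `g = f ∘ T - f (T u) • f`, while
`g ∘ E r = 0` because `g u = 0`; so the condition on the left says that `g` lives on `E s` only. -/
lemma CompleteOrthogonalIdempotents.mul_mul_ne_zero_exactly_iff {ι : Type*} [Fintype ι]
    [DecidableEq ι] {E : ι → Module.End 𝕜 V} {θ : ι → 𝕜} (hE : CompleteOrthogonalIdempotents E)
    (hθ : Function.Injective θ) {r s : ι} (hsr : s ≠ r) {f : V →ₗ[𝕜] 𝕜} {u : V} (hu : u ≠ 0)
    (hEr : E r = f.smulRight u) (hfu : f u = 1) (T : Module.End 𝕜 V) :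
    (E r * T * E s ≠ 0 ∧ ∀ t, t ≠ s → t ≠ r → E r * T * E t = 0) ↔
      (f ∘ₗ T - f (T u) • f) ∘ₗ (∑ i, θ i • E i) = θ s • (f ∘ₗ T - f (T u) • f) ∧
        f ∘ₗ T - f (T u) • f ≠ 0 := by
  set g := f ∘ₗ T - f (T u) • f
  have hgr : g ∘ₗ E r = 0 := by
    ext x
    simp [g, hEr, hfu]
  have hkey : ∀ t ≠ r, E r * T * E t = 0 ↔ g ∘ₗ E t = 0 := fun t ht => by
    have hfE : f ∘ₗ E t = 0 := by
      rw [← LinearMap.smulRight_eq_zero_iff hu, ← LinearMap.smulRight_mul, ← hEr,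
        hE.toOrthogonalIdempotents.ortho ht.symm]
    rw [hEr, LinearMap.smulRight_mul, LinearMap.smulRight_mul, LinearMap.smulRight_eq_zero_iff hu]
    simp [g, LinearMap.sub_comp, LinearMap.smul_comp, LinearMap.comp_assoc, hfE]
  rw [hE.comp_eq_smul_iff hθ g s]
  constructor
  · rintro ⟨hs, hother⟩
    have hvanish : ∀ t ≠ s, g ∘ₗ E t = 0 := fun t hts => by
      by_cases htr : t = r
      · exact htr ▸ hgr
      · exact (hkey t htr).1 (hother t hts htr)
    exact ⟨hvanish, fun hg => hs ((hkey s hsr).2 (by rw [hg, LinearMap.zero_comp]))⟩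
  · rintro ⟨hvanish, hg⟩
    refine ⟨fun hs => hg ?_, fun t hts htr => (hkey t htr).2 (hvanish t hts)⟩
    rw [← hE.comp_eq_self_of_forall_ne hvanish]
    exact (hkey s hsr).1 hs

end RankOne

section Coordinates

variable {𝕜 V ι : Type*} [Field 𝕜] [AddCommGroup V] [Module 𝕜 V] (v : Module.Basis ι 𝕜 V)

lemma Module.Basis.eq_zero_iff_of_apply_eq_mul {w x : ι → 𝕜} (hw : ∀ i, w i ≠ 0)
    {φ : V →ₗ[𝕜] 𝕜} (hφ : ∀ i, φ (v i) = w i * x i) : φ = 0 ↔ x = 0 := by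
  refine ⟨fun h => funext fun i => ?_, fun h => v.ext fun i => by simp [hφ, h]⟩
  simpa [h, hw i] using (hφ i).symm

lemma Module.Basis.exists_eq_smul_one_iff {T : Module.End 𝕜 V} {μ : ι → 𝕜}
    (hT : ∀ i, T (v i) = μ i • v i) {φ : V →ₗ[𝕜] 𝕜} {u : V} (hφu : φ u = 1) :
    (∃ κ : 𝕜, T = κ • 1) ↔ ∀ i, μ i = φ (T u) := by
  refine ⟨?_, fun h => ⟨φ (T u), v.ext fun i => by simp [hT, h i]⟩⟩
  rintro ⟨κ, rfl⟩ i
  have hi := hT i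
  simp only [LinearMap.smul_apply, Module.End.one_apply] at hi
  simp [smul_left_injective 𝕜 (v.ne_zero i) hi.symm, hφu]

variable [Fintype ι] [DecidableEq ι]

lemma Matrix.vecMul_mul_eq_mul_mulVec {M : Matrix ι ι 𝕜} {w : ι → 𝕜}
    (hM : (diagonal w * M).IsSymm) (x : ι → 𝕜) : vecMul (w * x) M = w * (M *ᵥ x) := by
  calc vecMul (w * x) M = vecMul (vecMul x (diagonal w)) M := by
        congr 1; ext i; simp [vecMul_diagonal, mul_comm]
    _ = (diagonal w * M) *ᵥ x := by rw [vecMul_vecMul, ← mulVec_transpose, hM.eq]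
    _ = w * (M *ᵥ x) := by rw [← mulVec_mulVec]; ext; simp [mulVec_diagonal]

lemma Module.Basis.apply_eq_smul_iff_mulVec (A : Module.End 𝕜 V) (y : V) (μ : 𝕜) :
    A y = μ • y ↔ LinearMap.toMatrix v v A *ᵥ v.repr y = μ • v.repr y := by
  rw [LinearMap.toMatrix_mulVec_repr, ← Finsupp.coe_smul, ← map_smul, DFunLike.coe_fn_eq,
    v.repr.injective.eq_iff]

lemma Module.Basis.exists_eq_smul_repr_of_mulVec_eq_smul {A : Module.End 𝕜 V} {μ : 𝕜} {u : V}
    (hA : ∀ y, A y = μ • y → y ∈ Submodule.span 𝕜 {u}) {x : ι → 𝕜}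
    (hx : LinearMap.toMatrix v v A *ᵥ x = μ • x) : ∃ c : 𝕜, x = c • ⇑(v.repr u) := by
  have hrepr : ⇑(v.repr (v.equivFun.symm x)) = x := by
    rw [← v.equivFun_apply, v.equivFun.apply_symm_apply]
  obtain ⟨c, hc⟩ := Submodule.mem_span_singleton.1
    (hA _ ((v.apply_eq_smul_iff_mulVec A _ μ).2 (by rwa [hrepr])))
  exact ⟨c, by rw [← hrepr, ← hc, map_smul, Finsupp.coe_smul]⟩

lemma Module.Basis.comp_eq_smul_iff_vecMul (A : Module.End 𝕜 V) (φ : V →ₗ[𝕜] 𝕜) (μ : 𝕜) :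
    φ ∘ₗ A = μ • φ ↔
      vecMul (fun i => φ (v i)) (LinearMap.toMatrix v v A) = μ • fun i => φ (v i) := by
  have hφA : ∀ j, φ (A (v j)) = vecMul (fun i => φ (v i)) (LinearMap.toMatrix v v A) j :=
    fun j => by
      conv_lhs => rw [← Matrix.toLin_toMatrix v v A, Matrix.toLin_self]
      simp [vecMul, dotProduct, mul_comm]
  refine ⟨fun h => funext fun j => ?_, fun h => v.ext fun j => ?_⟩
  · simpa [hφA] using LinearMap.congr_fun h (v j)
  · simpa [hφA] using congr_fun h j

lemma Module.Basis.comp_eq_smul_iff_mulVec_of_isSymm {A : Module.End 𝕜 V} {w : ι → 𝕜}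
    (hsym : (diagonal w * LinearMap.toMatrix v v A).IsSymm) (hw : ∀ i, w i ≠ 0)
    {φ : V →ₗ[𝕜] 𝕜} {x : ι → 𝕜} (hφ : ∀ i, φ (v i) = w i * x i) (μ : 𝕜) :
    φ ∘ₗ A = μ • φ ↔ LinearMap.toMatrix v v A *ᵥ x = μ • x := by
  rw [v.comp_eq_smul_iff_vecMul, show (fun i => φ (v i)) = w * x from funext hφ,
    vecMul_mul_eq_mul_mulVec hsym, ← mul_smul_comm]
  exact ⟨fun h => funext fun i => mul_left_cancel₀ (hw i) (congr_fun h i), fun h => by rw [h]⟩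

end Coordinates

section Tridiagonal

variable {𝕜 : Type*} [Field 𝕜] {d : ℕ}

def tridiag (a b c : ℕ → 𝕜) : Matrix (Fin (d + 1)) (Fin (d + 1)) 𝕜 := fun i j =>
  if (i : ℕ) = (j : ℕ) then a i
  else if (i : ℕ) + 1 = (j : ℕ) then b i
  else if (j : ℕ) + 1 = (i : ℕ) then c i else 0

lemma tridiag_mulVec_apply {a b c : ℕ → 𝕜} (hbd : b d = 0) (hc0 : c 0 = 0) (x : ℕ → 𝕜)
    (i : Fin (d + 1)) :
    (tridiag a b c *ᵥ fun j => x j) i = c i * x (i - 1) + a i * x i + b i * x (i + 1) := by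
  have hsplit : ∀ j : Fin (d + 1), tridiag a b c i j * x j =
      (if (j : ℕ) + 1 = i then c i * x (i - 1) else 0) + (if (j : ℕ) = i then a i * x i else 0) +
        (if (j : ℕ) = i + 1 then b i * x (i + 1) else 0) := fun j => by
    simp only [tridiag]
    split_ifs <;> first
      | omega
      | (simp only [zero_add, add_zero]; exact congrArg _ (congrArg x (by omega)))
      | simp
  simp only [mulVec, dotProduct, hsplit, sum_add_distrib]
  have hi := i.isLt
  rw [Fin.sum_univ_eq_sum_range (fun n => if n + 1 = (i : ℕ) then c i * x (i - 1) else 0),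
    Fin.sum_univ_eq_sum_range (fun n => if n = (i : ℕ) then a i * x i else 0),
    Fin.sum_univ_eq_sum_range (fun n => if n = (i : ℕ) + 1 then b i * x (i + 1) else 0),
    sum_ite_eq', sum_ite_eq', if_pos (mem_range.2 hi)]
  congr 2
  · obtain h | h := Nat.eq_zero_or_pos (i : ℕ)
    · simp [h, hc0]
    · obtain ⟨k, hk⟩ := Nat.exists_eq_add_one_of_ne_zero h.ne'
      simp only [hk, Nat.add_right_cancel_iff, sum_ite_eq', mem_range, add_tsub_cancel_right]
      rw [if_pos (by omega)]
  · split_ifs with h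
    · rfl
    · rw [show (i : ℕ) = d by simp at h; omega, hbd, zero_mul]

def tridiagSymmetrizer (b c : ℕ → 𝕜) (m : ℕ) : 𝕜 := ∏ l ∈ range m, b l / c (l + 1)

lemma tridiagSymmetrizer_ne_zero {b c : ℕ → 𝕜} (hb : ∀ i < d, b i ≠ 0)
    (hc : ∀ i, 0 < i → i ≤ d → c i ≠ 0) {m : ℕ} (hm : m ≤ d) : tridiagSymmetrizer b c m ≠ 0 :=
  prod_ne_zero_iff.2 fun l hl => by
    rw [mem_range] at hl
    exact div_ne_zero (hb l (by omega)) (hc (l + 1) (by omega) (by omega))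

lemma tridiagSymmetrizer_succ_mul {b c : ℕ → 𝕜} {m : ℕ} (hc : c (m + 1) ≠ 0) :
    tridiagSymmetrizer b c (m + 1) * c (m + 1) = tridiagSymmetrizer b c m * b m := by
  rw [tridiagSymmetrizer, prod_range_succ, mul_assoc, div_mul_cancel₀ _ hc]; rfl

lemma isSymm_diagonal_tridiagSymmetrizer_mul_tridiag (a b : ℕ → 𝕜) {c : ℕ → 𝕜}
    (hc : ∀ i, 0 < i → i ≤ d → c i ≠ 0) :
    (diagonal (fun i : Fin (d + 1) => tridiagSymmetrizer b c i) * tridiag a b c).IsSymm := by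
  ext i j
  simp only [transpose_apply, diagonal_mul, tridiag]
  have := i.isLt
  have := j.isLt
  split_ifs with h₁ _ _ _ h₂ _ _ h₃ <;> try omega
  · rw [h₁]
  · rw [← h₂]; exact (tridiagSymmetrizer_succ_mul (hc _ (by omega) (by omega))).symm
  · rw [← h₃]; exact tridiagSymmetrizer_succ_mul (hc _ (by omega) (by omega))
  · simp

lemma tridiag_mulVec_one {a b c : ℕ → 𝕜} (hbd : b d = 0) (hc0 : c 0 = 0) {ρ : 𝕜}
    (hrow : ∀ i ≤ d, c i + a i + b i = ρ) : tridiag a b c *ᵥ 1 = ρ • (1 : Fin (d + 1) → 𝕜) := by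
  ext i
  refine (tridiag_mulVec_apply (a := a) hbd hc0 (fun _ => 1) i).trans ?_
  simp [← hrow i (Nat.lt_succ_iff.1 i.isLt)]

lemma tridiag_mulVec_sub_eq_smul_iff {a b c : ℕ → 𝕜} (hbd : b d = 0) (hc0 : c 0 = 0) {ρ : 𝕜}
    (hrow : ∀ i ≤ d, c i + a i + b i = ρ) (x : ℕ → 𝕜) (κ σ : 𝕜) :
    (tridiag a b c *ᵥ fun j => x j - κ) = σ • (fun j : Fin (d + 1) => x j - κ) ↔
      ∀ i ≤ d, c i * x (i - 1) + a i * x i + b i * x (i + 1) - ρ * x i = (σ - ρ) * (x i - κ) := by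
  rw [funext_iff, Fin.forall_iff]
  refine forall_congr' fun i => ⟨fun h hi => ?_, fun h hi => ?_⟩
  · have hi' := h (by omega)
    rw [tridiag_mulVec_apply hbd hc0 (fun j => x j - κ), Pi.smul_apply, smul_eq_mul] at hi'
    linear_combination hi' + κ * hrow i hi
  · rw [tridiag_mulVec_apply hbd hc0 (fun j => x j - κ), Pi.smul_apply, smul_eq_mul]
    linear_combination h (by omega) - κ * hrow i (by omega)

/-- `w / k`, with `k` the symmetrizer, is a right `ρ`-eigenvector, hence constant. -/
lemma isSymm_diagonal_mul_tridiag_of_vecMul_eq_smul {a b c : ℕ → 𝕜} (hb : ∀ i < d, b i ≠ 0)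
    (hc : ∀ i, 0 < i → i ≤ d → c i ≠ 0) {ρ : 𝕜}
    (hρ : ∀ y : Fin (d + 1) → 𝕜, tridiag a b c *ᵥ y = ρ • y → ∃ μ : 𝕜, y = μ • 1)
    {w : Fin (d + 1) → 𝕜} (hw0 : w ≠ 0) (hw : vecMul w (tridiag a b c) = ρ • w) :
    (diagonal w * tridiag a b c).IsSymm ∧ ∀ i, w i ≠ 0 := by
  set k : Fin (d + 1) → 𝕜 := fun i => tridiagSymmetrizer b c i
  have hk : ∀ i, k i ≠ 0 := fun i => tridiagSymmetrizer_ne_zero hb hc (Nat.lt_succ_iff.1 i.isLt)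
  have hsym := isSymm_diagonal_tridiagSymmetrizer_mul_tridiag a b hc
  have hwk : w = k * (w / k) := by ext i; exact (mul_div_cancel₀ (w i) (hk i)).symm
  rw [hwk, vecMul_mul_eq_mul_mulVec hsym, ← mul_smul_comm] at hw
  obtain ⟨μ, hμ⟩ := hρ _ (funext fun i => mul_left_cancel₀ (hk i) (congr_fun hw i))
  have hwμ : w = μ • k := by rw [hwk, hμ]; ext; simp [mul_comm]
  have hμ0 : μ ≠ 0 := by rintro rfl; exact hw0 (by simpa using hwμ)
  refine ⟨by rw [hwμ, diagonal_smul, smul_mul]; exact hsym.smul μ, fun i => ?_⟩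
  simp [hwμ, hμ0, hk i]

end Tridiagonal

theorem stmt_19_general {𝕜 : Type*} [Field 𝕜] {V : Type*} [AddCommGroup V] [Module 𝕜 V]
    [FiniteDimensional 𝕜 V] {d : ℕ} (hdim : Module.finrank 𝕜 V = d + 1)
    (A : Module.End 𝕜 V)
    (Estar : Fin (d + 1) → Module.End 𝕜 V)
    (hidem : ∀ i j, Estar i * Estar j = if i = j then Estar i else 0)
    (θ : Fin (d + 1) → 𝕜) (hθ : Function.Injective θ)
    (E : Fin (d + 1) → Module.End 𝕜 V)
    (hEidem : ∀ i j, E i * E j = if i = j then E i else 0)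
    (hErank : ∀ i, Module.finrank 𝕜 (LinearMap.range (E i)) = 1)
    (hA : A = ∑ i, θ i • E i)
    (θstar : ℕ → 𝕜)
    (Astar : Module.End 𝕜 V) (hAstar : Astar = ∑ i : Fin (d + 1), θstar (i : ℕ) • Estar i)
    (v : Module.Basis (Fin (d + 1)) 𝕜 V) (hfeas : ∀ i, v i ∈ LinearMap.range (Estar i))
    (a b c : ℕ → 𝕜)
    (hM : ∀ i j : Fin (d + 1), LinearMap.toMatrix v v A i j =
      if (i : ℕ) = (j : ℕ) then a i
      else if (i : ℕ) + 1 = (j : ℕ) then b i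
      else if (j : ℕ) + 1 = (i : ℕ) then c i else 0)
    (hb : ∀ i, i < d → b i ≠ 0) (hbd : b d = 0)
    (hc : ∀ i, 0 < i → i ≤ d → c i ≠ 0) (hc0 : c 0 = 0)
    (r : Fin (d + 1)) (hrow : ∀ i ≤ d, c i + a i + b i = θ r)
    (s : Fin (d + 1)) (hsr : s ≠ r) :
    ((E r * Astar * E s ≠ 0) ∧
        (∀ t : Fin (d + 1), t ≠ s → t ≠ r → E r * Astar * E t = 0))
      ↔
      ((∀ i ≤ d,
          c i * θstar (i - 1) + a i * θstar i + b i * θstar (i + 1) - θ r * θstar i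
            = (θ s - θ r) * (θstar i - LinearMap.trace 𝕜 V (E r * Astar)))
      ∧ ¬∃ κ : 𝕜, Astar = κ • (1 : Module.End 𝕜 V)) := by
  classical
  have hE : CompleteOrthogonalIdempotents E :=
    (OrthogonalIdempotents.iff_mul_eq.2 hEidem).completeOrthogonalIdempotents_of_card_eq_finrank
      (fun i hi => zero_ne_one (by rw [← hErank i, hi, LinearMap.range_zero, finrank_bot]))
      (by rw [Fintype.card_fin, hdim])
  have hAstar_v : ∀ i, Astar (v i) = θstar i • v i := fun i => by
    simp [hAstar, LinearMap.sum_apply,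
      (OrthogonalIdempotents.iff_mul_eq.2 hidem).apply_of_mem_range _ (hfeas i)]
  have hAM : LinearMap.toMatrix v v A = tridiag a b c := Matrix.ext hM
  subst hA
  set u := v.equivFun.symm 1
  have hu_repr : ⇑(v.repr u) = 1 := by rw [← v.equivFun_apply, v.equivFun.apply_symm_apply]
  have hu : u ≠ 0 := fun h => by simpa [h] using congr_fun hu_repr 0
  have hAu : (∑ i, θ i • E i) u = θ r • u := by
    rw [v.apply_eq_smul_iff_mulVec, hu_repr, hAM, tridiag_mulVec_one hbd hc0 hrow]
  have hrange := hE.range_eq_span_of_apply_eq_smul hθ (hErank r) hu hAu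
  obtain ⟨hEr, hfu, hfA⟩ := hE.toOrthogonalIdempotents.eq_smulRight_comp_of_range_eq_span θ hrange
    (φ := v.coord 0) (by simp [hu_repr])
  set f := v.coord 0 ∘ₗ E r
  obtain ⟨hsym, hw⟩ := isSymm_diagonal_mul_tridiag_of_vecMul_eq_smul hb hc
    (fun y hy => v.exists_eq_smul_repr_of_mulVec_eq_smul
      (fun z hz => hrange ▸ hE.mem_range_of_apply_eq_smul hθ hz) (hAM ▸ hy) |>.imp
        fun μ hμ => hu_repr ▸ hμ)
    (fun h => by simp [v.ext (f₁ := f) (f₂ := 0) fun i => congr_fun h i] at hfu)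
    (hAM ▸ (v.comp_eq_smul_iff_vecMul _ f _).1 hfA)
  have htrace : LinearMap.trace 𝕜 V (E r * Astar) = f (Astar u) := by
    rw [hEr, LinearMap.smulRight_mul, LinearMap.trace_smulRight]; rfl
  have hg : ∀ i, (f ∘ₗ Astar - f (Astar u) • f) (v i) = f (v i) * (θstar i - f (Astar u)) :=
    fun i => by simp [hAstar_v]; ring
  rw [htrace, hE.mul_mul_ne_zero_exactly_iff hθ hsr hu hEr hfu Astar,
    v.comp_eq_smul_iff_mulVec_of_isSymm (hAM ▸ hsym) hw hg, hAM,
    tridiag_mulVec_sub_eq_smul_iff hbd hc0 hrow, Ne, v.eq_zero_iff_of_apply_eq_mul hw hg,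
    v.exists_eq_smul_one_iff hAstar_v hfu]
  simp [funext_iff, sub_eq_zero]

/-- Assuming the matrix representing A has constant row sum θᵣ: vertex r is adjacent to s
and no other vertex iff the θ*ᵢ satisfy the given recurrence and A* is not scalar. -/
theorem stmt_19 {𝕜 : Type*} [Field 𝕜] {V : Type*} [AddCommGroup V] [Module 𝕜 V]
    [FiniteDimensional 𝕜 V] {d : ℕ} (hdim : Module.finrank 𝕜 V = d + 1)
    (A : Module.End 𝕜 V)
    (Estar : Fin (d + 1) → Module.End 𝕜 V)
    (hidem : ∀ i j, Estar i * Estar j = if i = j then Estar i else 0)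
    (hrank : ∀ i, Module.finrank 𝕜 (LinearMap.range (Estar i)) = 1)
    (htri : ∀ i j : Fin (d + 1), 1 < |((i : ℕ) : ℤ) - ((j : ℕ) : ℤ)| → Estar i * A * Estar j = 0)
    (hirr : ∀ i j : Fin (d + 1), |((i : ℕ) : ℤ) - ((j : ℕ) : ℤ)| = 1 → Estar i * A * Estar j ≠ 0)
    (hd : 1 ≤ d)
    (θ : Fin (d + 1) → 𝕜) (hθ : Function.Injective θ)
    (E : Fin (d + 1) → Module.End 𝕜 V)
    (hEidem : ∀ i j, E i * E j = if i = j then E i else 0)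
    (hErank : ∀ i, Module.finrank 𝕜 (LinearMap.range (E i)) = 1)
    (hA : A = ∑ i, θ i • E i)
    (θstar : ℕ → 𝕜)
    (Astar : Module.End 𝕜 V) (hAstar : Astar = ∑ i : Fin (d + 1), θstar (i : ℕ) • Estar i)
    (v : Module.Basis (Fin (d + 1)) 𝕜 V) (hfeas : ∀ i, v i ∈ LinearMap.range (Estar i))
    (a b c : ℕ → 𝕜)
    (hM : ∀ i j : Fin (d + 1), LinearMap.toMatrix v v A i j =
      if (i : ℕ) = (j : ℕ) then a i
      else if (i : ℕ) + 1 = (j : ℕ) then b i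
      else if (j : ℕ) + 1 = (i : ℕ) then c i else 0)
    (ha : ∀ i : Fin (d + 1), a i = LinearMap.trace 𝕜 V (Estar i * A))
    (hb : ∀ i, i < d → b i ≠ 0) (hbd : b d = 0)
    (hc : ∀ i, 0 < i → i ≤ d → c i ≠ 0) (hc0 : c 0 = 0)
    (r : Fin (d + 1)) (hrow : ∀ i ≤ d, c i + a i + b i = θ r)
    (s : Fin (d + 1)) (hsr : s ≠ r) :
    ((E r * Astar * E s ≠ 0) ∧
        (∀ t : Fin (d + 1), t ≠ s → t ≠ r → E r * Astar * E t = 0))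
      ↔
      ((∀ i ≤ d,
          c i * θstar (i - 1) + a i * θstar i + b i * θstar (i + 1) - θ r * θstar i
            = (θ s - θ r) * (θstar i - LinearMap.trace 𝕜 V (E r * Astar)))
      ∧ ¬∃ κ : 𝕜, Astar = κ • (1 : Module.End 𝕜 V)) :=
  stmt_19_general hdim A Estar hidem θ hθ E hEidem hErank hA θstar Astar hAstar v hfeas a b c hM hb
    hbd hc hc0 r hrow s hsr
end
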